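/- arXiv:0909.0887 — 3 statements merged into one kernel-verified Lean document; each statement's English description precedes it below -/
import Mathlib

section
/- Fix a real number p with 0 < p < 1 and ε with 0 < ε < 1/2, set q = 1/p, and for each n let r = r(n) = ⌊z(n,p) − ε⌋. Let T_{(r,0,0,r)} = q^{2·C(r,2)} / [n!/(r!·r!·(n−2r)!)]. Then r²·T_{(r,0,0,r)} → 0 as n → ∞. -/
/-!
Write `r = r(n)` and `Λ = log_q n`. Stirling's upper bound `r! ≤ e √r (r/e)^r` and
`n!/(n-2r)! ≥ (n-2r+1)^{2r}` give
`log (r² T) ≤ r·[(r-1) log q + 2 log r - 2 - 2 log (n-2r+1)] + O(log r)`.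
The threshold `z` is exactly where this bracket vanishes to leading order: from `r ≤ z - ε` and
`r ≤ 2Λ` the bracket is at most `2 log (n/(n-2r+1)) - ε log q`, which tends to `-ε log q`
because `r = O(log n)`. Since `r → ∞`, `log (r² T) → -∞`.
-/

open Finset Filter

noncomputable section

/-- `z(n,p) = 2 log_q n − 2 log_q log_q n + 2 log_q (e/2) + 1`, where `q = 1/p`. -/
def zf (p : ℝ) (n : ℕ) : ℝ :=
  2 * Real.logb p⁻¹ n - 2 * Real.logb p⁻¹ (Real.logb p⁻¹ n)
    + 2 * Real.logb p⁻¹ (Real.exp 1 / 2) + 1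

open Real Topology
open scoped Nat

lemma factorial_le_exp_one_mul_sqrt_mul_pow {n : ℕ} (hn : n ≠ 0) :
    (n ! : ℝ) ≤ exp 1 * √n * (n / exp 1) ^ n := by
  obtain ⟨m, rfl⟩ := Nat.exists_eq_succ_of_ne_zero hn
  have h := Stirling.stirlingSeq'_antitone (Nat.zero_le m)
  simp only [Function.comp_apply, Stirling.stirlingSeq_one] at h
  rw [Stirling.stirlingSeq, div_le_iff₀ (by positivity)] at h
  exact h.trans_eq (by rw [sqrt_mul zero_le_two]; field_simp)

lemma log_factorial_le {n : ℕ} (hn : n ≠ 0) :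
    log (n ! : ℝ) ≤ n * log n - n + log n / 2 + 1 := by
  have hn' : (0 : ℝ) < n := by positivity
  calc log (n ! : ℝ) ≤ log (exp 1 * √n * (n / exp 1) ^ n) :=
        log_le_log (by positivity) (factorial_le_exp_one_mul_sqrt_mul_pow hn)
    _ = _ := by
      rw [log_mul (by positivity) (by positivity), log_mul (by positivity) (by positivity),
        log_exp, log_sqrt hn'.le, log_pow, log_div hn'.ne' (exp_pos 1).ne', log_exp]
      ring

lemma log_factorial_sub_add_mul_log_le {n k : ℕ} (hk : k ≤ n) :
    log ((n - k)! : ℝ) + k * log ((n - k : ℕ) + 1 : ℝ) ≤ log (n ! : ℝ) := by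
  have h : ((n - k)! * ((n - k : ℕ) + 1) ^ k : ℝ) ≤ n ! := by
    have := Nat.factorial_mul_pow_le_factorial (m := n - k) (n := k)
    rw [Nat.sub_add_cancel hk] at this
    exact_mod_cast this
  rw [← log_pow, ← log_mul (by positivity) (by positivity)]
  exact log_le_log (by positivity) h

/-- The paper's `T_{(r,0,0,r)}`. -/
def diagTerm (q : ℝ) (n r : ℕ) : ℝ :=
  q ^ (2 * r.choose 2) / ((n ! : ℝ) / ((r ! : ℝ) * r ! * (n - 2 * r)!))

lemma log_sq_mul_diagTerm_le {q : ℝ} (hq : 0 < q) {n r : ℕ} (hr : r ≠ 0) (hrn : 2 * r ≤ n) :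
    log ((r : ℝ) ^ 2 * diagTerm q n r) ≤
      r * ((r - 1) * log q + 2 * log r - 2 - 2 * log ((n - 2 * r : ℕ) + 1 : ℝ))
        + 3 * log r + 2 := by
  have hlogT : log (diagTerm q n r) =
      r * (r - 1) * log q + 2 * log (r ! : ℝ) + log ((n - 2 * r)! : ℝ) - log (n ! : ℝ) := by
    rw [diagTerm, div_div_eq_mul_div, log_div (by positivity) (by positivity),
      log_mul (by positivity) (by positivity), log_mul (by positivity) (by positivity),
      log_mul (by positivity) (by positivity), log_pow, Nat.cast_mul, Nat.cast_choose_two]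
    ring
  have hfac := log_factorial_le hr
  have hsub := log_factorial_sub_add_mul_log_le hrn
  rw [log_mul (by positivity) (by unfold diagTerm; positivity), log_pow, hlogT]
  push_cast at hsub ⊢
  linarith

lemma sub_one_mul_log_add_two_mul_log_le {q Λ ε x : ℝ} (hq : 1 < q) (hΛ : 0 < Λ) (hx : 0 < x)
    (hx2 : x ≤ 2 * Λ) (hxz : x ≤ 2 * Λ - 2 * logb q Λ + 2 * logb q (exp 1 / 2) + 1 - ε) :
    (x - 1) * log q + 2 * log x - 2 ≤ 2 * Λ * log q - ε * log q := by
  have hlq := log_pos hq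
  have h1 : x * log q ≤ (2 * Λ + 1 - ε) * log q - 2 * log Λ + 2 * (1 - log 2) := by
    have := mul_le_mul_of_nonneg_right hxz hlq.le
    rw [logb, logb, log_div (exp_ne_zero 1) two_ne_zero, log_exp] at this
    exact this.trans_eq (by field_simp; ring)
  have h2 : log x ≤ log 2 + log Λ := by
    rw [← log_mul two_ne_zero hΛ.ne']
    exact log_le_log hx hx2
  linarith

lemma eventually_log_le_mul {c : ℝ} (hc : 0 < c) : ∀ᶠ x in atTop, log x ≤ c * x := by
  filter_upwards [isLittleO_log_id_atTop.bound hc, eventually_ge_atTop 0] with x hx hx0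
  simpa [abs_of_nonneg hx0] using (le_abs_self _).trans hx

lemma tendsto_mul_log_add_div_self_atTop (a b : ℝ) :
    Tendsto (fun x => (a * log x + b) / x) atTop (𝓝 0) :=
  ((isLittleO_log_id_atTop.const_mul_left a).add
    (Asymptotics.isLittleO_const_id_atTop b)).tendsto_div_nhds_zero

lemma eventually_le_two_mul_sub_two_mul_logb_add_le {q : ℝ} (hq : 1 < q) (c : ℝ) :
    ∀ᶠ x in atTop, x ≤ 2 * x - 2 * logb q x + c ∧ 2 * x - 2 * logb q x + c ≤ 2 * x := by
  have hlq := log_pos hq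
  filter_upwards [eventually_log_le_mul (by positivity : 0 < log q / 4),
    eventually_ge_atTop (-2 * c), (tendsto_logb_atTop hq).eventually_ge_atTop (c / 2)]
    with x h1 h2 h3
  have : logb q x ≤ x / 4 := by
    rw [logb, div_le_iff₀ hlq]
    linarith
  constructor <;> linarith

lemma eventually_two_mul_le {s : ℕ → ℕ}
    (hs : Tendsto (fun n => (s n : ℝ) / n) atTop (𝓝 0)) :
    ∀ᶠ n in atTop, 2 * s n ≤ n := by
  filter_upwards [hs.eventually (gt_mem_nhds (by norm_num : (0 : ℝ) < 1 / 2)),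
    eventually_gt_atTop 0] with n hsn hn
  rw [div_lt_iff₀ (by positivity)] at hsn
  exact_mod_cast (by linarith : (2 * s n : ℝ) ≤ n)

lemma tendsto_log_sub_log_sub_two_mul {s : ℕ → ℕ}
    (hs : Tendsto (fun n => (s n : ℝ) / n) atTop (𝓝 0)) :
    Tendsto (fun n : ℕ => log n - log ((n - 2 * s n : ℕ) + 1 : ℝ)) atTop (𝓝 0) := by
  have hratio : Tendsto (fun n : ℕ => (((n - 2 * s n : ℕ) : ℝ) + 1) / n) atTop (𝓝 1) := by
    have h := (tendsto_const_nhds (x := (1 : ℝ))).sub (hs.const_mul 2) |>.add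
      tendsto_one_div_atTop_nhds_zero_nat
    rw [mul_zero, sub_zero, add_zero] at h
    refine h.congr' ?_
    filter_upwards [eventually_two_mul_le hs, eventually_gt_atTop 0] with n h2s hn
    rw [Nat.cast_sub h2s]
    push_cast
    field_simp
  have h := ((continuousAt_log one_ne_zero).tendsto.comp hratio).neg
  rw [log_one, neg_zero] at h
  refine h.congr' ?_
  filter_upwards [eventually_gt_atTop 0] with n hn
  rw [Function.comp_apply, log_div (by positivity) (by positivity)]
  ring

def rf (p ε : ℝ) (n : ℕ) : ℕ := ⌊zf p n - ε⌋.toNat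

section

variable {p : ℝ}

lemma eventually_rf_bounds (hq : 1 < p⁻¹) (ε : ℝ) :
    ∀ᶠ n : ℕ in atTop, logb p⁻¹ n - 1 < rf p ε n ∧ (rf p ε n : ℝ) ≤ zf p n - ε ∧
      (rf p ε n : ℝ) ≤ 2 * logb p⁻¹ n := by
  have hΛ := (tendsto_logb_atTop hq).comp tendsto_natCast_atTop_atTop
  filter_upwards [hΛ.eventually (eventually_le_two_mul_sub_two_mul_logb_add_le hq
    (2 * logb p⁻¹ (exp 1 / 2) + 1 - ε))] with n hn
  have hz : zf p n - ε = 2 * logb p⁻¹ n - 2 * logb p⁻¹ (logb p⁻¹ n) +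
      (2 * logb p⁻¹ (exp 1 / 2) + 1 - ε) := by
    unfold zf
    ring
  simp only [Function.comp_apply, ← hz] at hn
  have h0 : 0 ≤ zf p n - ε := by linarith [hn.1, hn.2]
  rw [rf, Int.floor_toNat]
  exact ⟨by linarith [Nat.lt_floor_add_one (zf p n - ε)], Nat.floor_le h0,
    by linarith [Nat.floor_le h0]⟩

lemma tendsto_rf_atTop (hq : 1 < p⁻¹) (ε : ℝ) :
    Tendsto (fun n => (rf p ε n : ℝ)) atTop atTop := by
  refine tendsto_atTop_mono' _ ?_ (tendsto_atTop_add_const_right _ (-1)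
    ((tendsto_logb_atTop hq).comp tendsto_natCast_atTop_atTop))
  filter_upwards [eventually_rf_bounds hq ε] with n hn
  simp only [Function.comp_apply]
  linarith [hn.1]

lemma tendsto_rf_div_atTop (hq : 1 < p⁻¹) (ε : ℝ) :
    Tendsto (fun n => (rf p ε n : ℝ) / n) atTop (𝓝 0) := by
  have hlog : Tendsto (fun n : ℕ => 2 / log p⁻¹ * (log n / n)) atTop (𝓝 0) := by
    simpa using ((isLittleO_log_id_atTop.tendsto_div_nhds_zero).comp
      tendsto_natCast_atTop_atTop).const_mul (2 / log p⁻¹)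
  refine tendsto_of_tendsto_of_tendsto_of_le_of_le' tendsto_const_nhds hlog
    (Eventually.of_forall fun n => by positivity) ?_
  filter_upwards [eventually_rf_bounds hq ε] with n hn
  calc (rf p ε n : ℝ) / n ≤ 2 * logb p⁻¹ n / n := by gcongr; exact hn.2.2
    _ = 2 / log p⁻¹ * (log n / n) := by rw [logb]; ring

lemma eventually_log_sq_mul_diagTerm_rf_le (hq : 1 < p⁻¹) (ε : ℝ) :
    ∀ᶠ n in atTop, log ((rf p ε n : ℝ) ^ 2 * diagTerm p⁻¹ n (rf p ε n)) ≤
      rf p ε n * (2 * (log n - log ((n - 2 * rf p ε n : ℕ) + 1 : ℝ)) - ε * log p⁻¹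
        + (3 * log (rf p ε n) + 2) / rf p ε n) := by
  filter_upwards [eventually_rf_bounds hq ε, (tendsto_rf_atTop hq ε).eventually_gt_atTop 0,
    eventually_two_mul_le (tendsto_rf_div_atTop hq ε)] with n ⟨_, hrz, hr2Λ⟩ hr h2r
  set r := rf p ε n
  have hΛ : 0 < logb p⁻¹ n := by linarith
  have hthr := sub_one_mul_log_add_two_mul_log_le hq hΛ hr hr2Λ hrz
  rw [logb, mul_assoc, div_mul_cancel₀ _ (log_pos hq).ne'] at hthr
  calc _ ≤ r * ((r - 1) * log p⁻¹ + 2 * log r - 2 - 2 * log ((n - 2 * r : ℕ) + 1 : ℝ))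
        + 3 * log r + 2 :=
        log_sq_mul_diagTerm_le (by positivity) (by exact_mod_cast hr.ne') h2r
    _ ≤ r * (2 * log n - ε * log p⁻¹ - 2 * log ((n - 2 * r : ℕ) + 1 : ℝ))
        + 3 * log r + 2 := by
        gcongr
    _ = _ := by
        field_simp
        ring

end

theorem stmt10_general (p ε : ℝ) (hp0 : 0 < p) (hp1 : p < 1) (hε : 0 < ε) :
    Tendsto (fun n : ℕ =>
        (⌊zf p n - ε⌋.toNat : ℝ) ^ 2 *
          ((p⁻¹) ^ (2 * ⌊zf p n - ε⌋.toNat.choose 2) /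
            ((n.factorial : ℝ) / ((⌊zf p n - ε⌋.toNat.factorial : ℝ) *
              ⌊zf p n - ε⌋.toNat.factorial * (n - 2 * ⌊zf p n - ε⌋.toNat).factorial))))
      atTop (nhds 0) := by
  have hq : 1 < p⁻¹ := (one_lt_inv₀ hp0).2 hp1
  change Tendsto (fun n : ℕ => (rf p ε n : ℝ) ^ 2 * diagTerm p⁻¹ n (rf p ε n))
    atTop (𝓝 0)
  have hbracket : Tendsto (fun n : ℕ => 2 * (log n - log ((n - 2 * rf p ε n : ℕ) + 1 : ℝ))
      - ε * log p⁻¹ + (3 * log (rf p ε n) + 2) / rf p ε n) atTop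
      (𝓝 (2 * 0 - ε * log p⁻¹ + 0)) :=
    (((tendsto_log_sub_log_sub_two_mul (tendsto_rf_div_atTop hq ε)).const_mul 2).sub_const _).add
      ((tendsto_mul_log_add_div_self_atTop 3 2).comp (tendsto_rf_atTop hq ε))
  have hlog := (tendsto_rf_atTop hq ε).atTop_mul_neg
    (by linarith [mul_pos hε (log_pos hq)]) hbracket
  refine (tendsto_exp_atBot.comp (tendsto_atBot_mono' _
    (eventually_log_sq_mul_diagTerm_rf_le hq ε) hlog)).congr' ?_
  filter_upwards [(tendsto_rf_atTop hq ε).eventually_gt_atTop 0] with n hn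
  exact exp_log (by unfold diagTerm; positivity)

/-- For `r = r(n) = ⌊z(n,p) − ε⌋` and `T_{(r,0,0,r)} = q^{2·C(r,2)}/[n!/(r!·r!·(n−2r)!)]`,
one has `r²·T_{(r,0,0,r)} → 0` as `n → ∞`. -/
theorem stmt10 (p ε : ℝ) (hp0 : 0 < p) (hp1 : p < 1) (hε : 0 < ε) (hε' : ε < 1/2) :
    Tendsto (fun n : ℕ =>
        (⌊zf p n - ε⌋.toNat : ℝ) ^ 2 *
          ((p⁻¹) ^ (2 * ⌊zf p n - ε⌋.toNat.choose 2) /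
            ((n.factorial : ℝ) / ((⌊zf p n - ε⌋.toNat.factorial : ℝ) *
              ⌊zf p n - ε⌋.toNat.factorial * (n - 2 * ⌊zf p n - ε⌋.toNat).factorial))))
      atTop (nhds 0) :=
  stmt10_general p ε hp0 hp1 hε

end
end

section
/- Fix a real number p with 0 < p < 1 and ε with 0 < ε < 1/2, set q = 1/p, and for each n let r = r(n) = ⌊z(n,p) − ε⌋. Then for all sufficiently large n, T_{(1,0,0,0)} ≤ r²/n, where T_{(1,0,0,0)} = r·[(n−2r)!/((r−1)!·r!·(n−4r+1)!)] / [n!/(r!·r!·(n−2r)!)]. -/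
/-!
The bound is purely combinatorial once `4r ≤ n`: since `r! = r·(r-1)!`, the left side equals
`r² · ((n-2r)!)² / ((n-4r+1)! · n!)`, and log-convexity of the factorial,
`((a+k)!)² ≤ a! · (a+2k)!` with `a = n-4r+1`, `k = 2r-1`, bounds `((n-2r)!)²` by
`(n-4r+1)! · (n-1)!`. The condition `4r ≤ n` holds eventually because for `q = 1/p > 1`
we have `z(n,p) ≤ 2 log_q n + O(1) = o(n)`.
-/

open Finset Filter

noncomputable section

open scoped Nat

theorem Nat.factorial_add_mul_self_le (a k : ℕ) : (a + k)! * (a + k)! ≤ a ! * (a + k + k)! :=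
  calc (a + k)! * (a + k)! = a ! * (a + 1).ascFactorial k * (a + k)! := by
        rw [Nat.factorial_mul_ascFactorial]
    _ ≤ a ! * (a + k + 1).ascFactorial k * (a + k)! := by gcongr; omega
    _ = a ! * (a + k + k)! := by rw [← Nat.factorial_mul_ascFactorial (a + k) k]; ring

theorem Nat.mul_factorial_sq_le (n r : ℕ) (hr : 1 ≤ r) (hn : 4 * r ≤ n) :
    n * (n - 2 * r)! ^ 2 ≤ (n - 4 * r + 1)! * n ! := by
  obtain ⟨m, rfl⟩ : ∃ m, n = m + 1 := ⟨n - 1, by omega⟩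
  have h := Nat.factorial_add_mul_self_le (m + 1 - 4 * r + 1) (2 * r - 1)
  rw [show m + 1 - 4 * r + 1 + (2 * r - 1) = m + 1 - 2 * r by omega,
    show m + 1 - 2 * r + (2 * r - 1) = m by omega] at h
  rw [Nat.factorial_succ m, sq]
  nlinarith

theorem mul_factorial_ratio_le_sq_div (n r : ℕ) (hn : 4 * r ≤ n) :
    (r : ℝ) * (((n - 2 * r)! : ℝ) / (((r - 1)! : ℝ) * r ! * (n - 4 * r + 1)!)) /
        ((n ! : ℝ) / ((r ! : ℝ) * r ! * (n - 2 * r)!))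
      ≤ (r : ℝ) ^ 2 / n := by
  rcases Nat.eq_zero_or_pos r with rfl | hr
  · simp
  have hn0 : (0 : ℝ) < n := by exact_mod_cast (show 0 < n by omega)
  have hfact : (r : ℝ) * (r - 1)! = r ! := by exact_mod_cast Nat.mul_factorial_pred hr.ne'
  have hkey : (n : ℝ) * (n - 2 * r)! ^ 2 ≤ (n - 4 * r + 1)! * n ! := by
    exact_mod_cast Nat.mul_factorial_sq_le n r hr hn
  calc (r : ℝ) * (((n - 2 * r)! : ℝ) / (((r - 1)! : ℝ) * r ! * (n - 4 * r + 1)!)) /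
        ((n ! : ℝ) / ((r ! : ℝ) * r ! * (n - 2 * r)!))
      = (r : ℝ) ^ 2 * ((n - 2 * r)! ^ 2 / ((n - 4 * r + 1)! * n !)) := by
        rw [← hfact]; field_simp
    _ ≤ (r : ℝ) ^ 2 * (1 / n) := by
        have hratio : ((n - 2 * r)! : ℝ) ^ 2 / ((n - 4 * r + 1)! * n !) ≤ 1 / n := by
          rw [div_le_div_iff₀ (by positivity) hn0]
          linarith
        gcongr
    _ = (r : ℝ) ^ 2 / n := by ring

theorem four_mul_floor_toNat_le {x : ℝ} {n : ℕ} (h : x ≤ n / 4) : 4 * ⌊x⌋.toNat ≤ n := by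
  have hfloor := Nat.floor_mono h
  rw [Nat.floor_div_ofNat, Nat.floor_natCast] at hfloor
  rw [Int.floor_toNat]
  omega

theorem eventually_zf_sub_le {p : ℝ} (hp0 : 0 < p) (hp1 : p < 1) (ε : ℝ) :
    ∀ᶠ n : ℕ in atTop, zf p n - ε ≤ n / 4 := by
  have hq : 1 < p⁻¹ := (one_lt_inv₀ hp0).mpr hp1
  set c := 2 * Real.logb p⁻¹ (Real.exp 1 / 2) + 1 - ε
  have hlittle : (fun x : ℝ => 2 * Real.logb p⁻¹ x + c) =o[atTop] id :=
    (Real.isLittleO_logb_id_atTop.const_mul_left 2).add (Asymptotics.isLittleO_const_id_atTop c)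
  filter_upwards
    [((Real.tendsto_logb_atTop hq).comp tendsto_natCast_atTop_atTop).eventually_ge_atTop 1,
    (hlittle.comp_tendsto tendsto_natCast_atTop_atTop).bound (by norm_num : (0 : ℝ) < 1 / 4)]
    with n hy hbound
  have hloglog : 0 ≤ Real.logb p⁻¹ (Real.logb p⁻¹ n) := Real.logb_nonneg hq hy
  have hlin : 2 * Real.logb p⁻¹ n + c ≤ n / 4 := by
    simpa [Real.norm_eq_abs, div_eq_inv_mul] using (le_abs_self _).trans hbound
  simp only [zf, c] at hlin ⊢
  linarith

theorem stmt12_general (p ε : ℝ) (hp0 : 0 < p) (hp1 : p < 1) :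
    ∀ᶠ n : ℕ in atTop,
      (⌊zf p n - ε⌋.toNat : ℝ) *
          (((n - 2 * ⌊zf p n - ε⌋.toNat).factorial : ℝ) /
            (((⌊zf p n - ε⌋.toNat - 1).factorial : ℝ) * ⌊zf p n - ε⌋.toNat.factorial *
              (n - 4 * ⌊zf p n - ε⌋.toNat + 1).factorial)) /
          ((n.factorial : ℝ) / ((⌊zf p n - ε⌋.toNat.factorial : ℝ) *
            ⌊zf p n - ε⌋.toNat.factorial * (n - 2 * ⌊zf p n - ε⌋.toNat).factorial))
        ≤ (⌊zf p n - ε⌋.toNat : ℝ) ^ 2 / n := by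
  filter_upwards [eventually_zf_sub_le hp0 hp1 ε] with n hn
  exact mul_factorial_ratio_le_sq_div n _ (four_mul_floor_toNat_le hn)

/-- For `r = r(n) = ⌊z(n,p) − ε⌋` one has, for all sufficiently large `n`,
`T_{(1,0,0,0)} ≤ r²/n`, where
`T_{(1,0,0,0)} = r·[(n−2r)!/((r−1)!·r!·(n−4r+1)!)] / [n!/(r!·r!·(n−2r)!)]`. -/
theorem stmt12 (p ε : ℝ) (hp0 : 0 < p) (hp1 : p < 1) (hε : 0 < ε) (hε' : ε < 1/2) :
    ∀ᶠ n : ℕ in atTop,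
      (⌊zf p n - ε⌋.toNat : ℝ) *
          (((n - 2 * ⌊zf p n - ε⌋.toNat).factorial : ℝ) /
            (((⌊zf p n - ε⌋.toNat - 1).factorial : ℝ) * ⌊zf p n - ε⌋.toNat.factorial *
              (n - 4 * ⌊zf p n - ε⌋.toNat + 1).factorial)) /
          ((n.factorial : ℝ) / ((⌊zf p n - ε⌋.toNat.factorial : ℝ) *
            ⌊zf p n - ε⌋.toNat.factorial * (n - 2 * ⌊zf p n - ε⌋.toNat).factorial))
        ≤ (⌊zf p n - ε⌋.toNat : ℝ) ^ 2 / n :=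
  stmt12_general p ε hp0 hp1

end
end

section
/- Fix a real number p with 0 < p < 1 and ε with 0 < ε < 1/2, set q = 1/p, and for each n let r = r(n) = ⌊z(n,p) − ε⌋. Then there exists a constant C > 0 (independent of n) such that for all sufficiently large n, T_{(r−1,0,0,0)} ≤ C·(log_q n)²/n. In particular r⁴·T_{(r−1,0,0,0)} → 0 as n → ∞. -/
open Finset Filter

noncomputable section

/-- The set `D` of vectors `(a,b,c,d)` of nonnegative integers with
`a+b ≤ r`, `a+c ≤ r`, `c+d ≤ r`, `b+d ≤ r`. -/
def Dset (r : ℕ) : Finset (ℕ × ℕ × ℕ × ℕ) :=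
  (Finset.range (r+1) ×ˢ Finset.range (r+1) ×ˢ Finset.range (r+1) ×ˢ Finset.range (r+1)).filter
    (fun α => α.1 + α.2.1 ≤ r ∧ α.1 + α.2.2.1 ≤ r ∧ α.2.2.1 + α.2.2.2 ≤ r ∧ α.2.1 + α.2.2.2 ≤ r)

/-- The coefficient `F_α` for `α = (a,b,c,d)`. -/
def Fa (n r : ℕ) (α : ℕ × ℕ × ℕ × ℕ) : ℝ :=
  match α with
  | (a, b, c, d) =>
    ((r.factorial : ℝ) / ((a.factorial : ℝ) * c.factorial * (r - a - c).factorial)) *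
    ((r.factorial : ℝ) / ((b.factorial : ℝ) * d.factorial * (r - b - d).factorial)) *
    (((n - 2*r).factorial : ℝ) /
      (((r - a - b).factorial : ℝ) * (r - c - d).factorial * (n - 4*r + a + b + c + d).factorial)) /
    ((n.factorial : ℝ) / ((r.factorial : ℝ) * r.factorial * (n - 2*r).factorial))

/-- `L(α) = C(a,2) + C(b,2) + C(c,2) + C(d,2)`. -/
def La (α : ℕ × ℕ × ℕ × ℕ) : ℕ :=
  α.1.choose 2 + α.2.1.choose 2 + α.2.2.1.choose 2 + α.2.2.2.choose 2

/-- `T_α = F_α · q^{L(α)}` with `q = 1/p`. -/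
def Ta (n r : ℕ) (p : ℝ) (α : ℕ × ℕ × ℕ × ℕ) : ℝ := Fa n r α * (p⁻¹) ^ (La α)

/-!
For `α = (r-1,0,0,0)` the coefficient `F_α` collapses to `r·r!·((n-2r)!)² / ((n-3r-1)!·n!)`,
which elementary factorial bounds (and `r! ≤ e·r·(r/e)^r` from Stirling) make at most
`e²·r²·n·(r/(en))^r`, while `q^{L(α)} = q·(q^{(r-3)/2})^r`. So `T_α ≤ e²·q·r²·n·u^r` with
`u = r·q^{(r-3)/2}/(en)`. Since `q^{z/2} = e·n·√q / (2·log_q n)`, the choice `r ≤ z - ε` forces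
`u ≤ q^{-(1+ε/2)}`, and `r > z - ε - 1` then turns `u^r` into `O((log_q n / n)^{2+ε})`. Hence
`T_α = O((log_q n)^{4+ε} / n^{1+ε})`, and the spare factor `n^{-ε}` absorbs any power of `log_q n`.
-/

open Real
open scoped Nat Topology

theorem Nat.factorial_le_factorial_mul_pow (m k : ℕ) : (m + k)! ≤ m ! * (m + k) ^ k := by
  rw [← Nat.factorial_mul_descFactorial (Nat.le_add_left k m), Nat.add_sub_cancel]
  exact Nat.mul_le_mul_left _ (Nat.descFactorial_le_pow _ _)

theorem Nat.factorial_mul_pow_self_le_factorial (m k : ℕ) : m ! * m ^ k ≤ (m + k)! :=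
  (Nat.mul_le_mul_left _ (Nat.pow_le_pow_left m.le_succ k)).trans
    Nat.factorial_mul_pow_le_factorial

theorem factorial_le_exp_one_mul_pow {m : ℕ} (hm : m ≠ 0) :
    (m ! : ℝ) ≤ exp 1 * m * (m / exp 1) ^ m := by
  obtain ⟨k, rfl⟩ := Nat.exists_eq_succ_of_ne_zero hm
  set x : ℝ := ((k.succ : ℕ) : ℝ)
  have hx : 1 ≤ x := by simp [x]
  have hseq : Stirling.stirlingSeq k.succ ≤ exp 1 / √2 := by
    simpa using Stirling.stirlingSeq'_antitone (Nat.zero_le k)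
  rw [Stirling.stirlingSeq, div_le_iff₀ (by positivity), Real.sqrt_mul zero_le_two] at hseq
  calc (k.succ ! : ℝ) ≤ exp 1 / √2 * (√2 * √x * (x / exp 1) ^ k.succ) := hseq
    _ = exp 1 * √x * (x / exp 1) ^ k.succ := by field_simp
    _ ≤ exp 1 * x * (x / exp 1) ^ k.succ := by
      gcongr
      exact Real.sqrt_le_self_iff.2 (Or.inr hx)

theorem add_pow_le_exp_mul_pow {x y : ℝ} (hx : 0 < x) (hy : 0 ≤ y) (k : ℕ) :
    (x + y) ^ k ≤ exp (k * y / x) * x ^ k := by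
  have h : x + y ≤ exp (y / x) * x := by
    have := add_one_le_exp (y / x)
    calc x + y = (y / x + 1) * x := by field_simp; ring
      _ ≤ exp (y / x) * x := by gcongr
  calc (x + y) ^ k ≤ (exp (y / x) * x) ^ k := by gcongr
    _ = exp (k * y / x) * x ^ k := by rw [mul_pow, ← exp_nat_mul, mul_div_assoc]

theorem Fa_pred_eq {n r : ℕ} (hr : 1 ≤ r) (hn : 4 * r ≤ n) :
    Fa n r (r - 1, 0, 0, 0) =
      r * r ! * ((n - 2 * r)! : ℝ) ^ 2 / ((n - 3 * r - 1)! * n !) := by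
  have hsucc : r ! = r * (r - 1)! := by
    conv_lhs => rw [← Nat.sub_add_cancel hr]
    rw [Nat.factorial_succ, Nat.sub_add_cancel hr]
  simp only [Fa, show r - (r - 1) - 0 = 1 by omega, show r - 0 - 0 = r by omega,
    Nat.add_zero, show n - 4 * r + (r - 1) = n - 3 * r - 1 by omega, Nat.factorial_one,
    Nat.factorial_zero, hsucc]
  push_cast
  field_simp

theorem Fa_pred_le_mul_pow_div {n r : ℕ} (hr : 1 ≤ r) (hn : 4 * r ≤ n) :
    Fa n r (r - 1, 0, 0, 0) ≤ r * r ! * ((n : ℝ) ^ (r + 1) / ((n - 2 * r : ℕ) : ℝ) ^ (2 * r)) := by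
  set m := n - 2 * r
  have hupper : (m ! : ℝ) ≤ (n - 3 * r - 1)! * (n : ℝ) ^ (r + 1) := by
    have h := Nat.factorial_le_factorial_mul_pow (n - 3 * r - 1) (r + 1)
    rw [show n - 3 * r - 1 + (r + 1) = m by omega] at h
    exact_mod_cast h.trans (Nat.mul_le_mul_left _ (Nat.pow_le_pow_left (by omega) _))
  have hlower : (m ! : ℝ) * (m : ℝ) ^ (2 * r) ≤ n ! := by
    have h := Nat.factorial_mul_pow_self_le_factorial m (2 * r)
    rw [show m + 2 * r = n by omega] at h
    exact_mod_cast h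
  have hm0 : (0 : ℝ) < m := by exact_mod_cast (show 0 < m by omega)
  have key : (m ! : ℝ) ^ 2 ≤ (n : ℝ) ^ (r + 1) / (m : ℝ) ^ (2 * r) * ((n - 3 * r - 1)! * n !) := by
    rw [div_mul_eq_mul_div, le_div_iff₀ (by positivity), sq, mul_assoc]
    calc (m ! : ℝ) * (m ! * (m : ℝ) ^ (2 * r))
        ≤ ((n - 3 * r - 1)! * (n : ℝ) ^ (r + 1)) * n ! := by gcongr
      _ = _ := by ring
  rw [Fa_pred_eq hr hn, div_le_iff₀ (by positivity)]
  exact (mul_le_mul_of_nonneg_left key (by positivity)).trans_eq (by ring)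

theorem Fa_pred_le {n r : ℕ} (hr : 1 ≤ r) (hn : 4 * r ^ 2 + 2 * r ≤ n) :
    Fa n r (r - 1, 0, 0, 0) ≤ exp 2 * r ^ 2 * n * (r / (exp 1 * n)) ^ r := by
  have h4r : 4 * r ≤ n := by nlinarith
  have h2r : 2 * r ≤ n := by omega
  set m := n - 2 * r with hm
  have hm0 : (0 : ℝ) < m := by exact_mod_cast (show 0 < m by omega)
  have hn0 : (0 : ℝ) < n := by exact_mod_cast (show 0 < n by omega)
  have hratio : (n : ℝ) ^ (2 * r) ≤ exp 1 * (m : ℝ) ^ (2 * r) := by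
    have hmn : (m : ℝ) + 2 * r = n := by rw [hm]; push_cast [h2r]; ring
    have h := add_pow_le_exp_mul_pow hm0 (by positivity : (0 : ℝ) ≤ 2 * r) (2 * r)
    rw [hmn] at h
    refine h.trans (mul_le_mul_of_nonneg_right (exp_le_exp.2 ?_) (by positivity))
    rw [div_le_one hm0, hm]
    have : ((4 * r ^ 2 + 2 * r : ℕ) : ℝ) ≤ n := by exact_mod_cast hn
    push_cast at this ⊢
    linarith
  calc Fa n r (r - 1, 0, 0, 0) ≤ r * r ! * ((n : ℝ) ^ (r + 1) / (m : ℝ) ^ (2 * r)) :=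
        Fa_pred_le_mul_pow_div hr h4r
    _ ≤ r * (exp 1 * r * (r / exp 1) ^ r) * (exp 1 * (n : ℝ) ^ (r + 1) / (n : ℝ) ^ (2 * r)) := by
        refine mul_le_mul ?_ ?_ (by positivity) (by positivity)
        · gcongr
          exact factorial_le_exp_one_mul_pow (by omega)
        rw [div_le_div_iff₀ (by positivity) (by positivity)]
        nlinarith [mul_le_mul_of_nonneg_left hratio (pow_nonneg hn0.le (r + 1))]
    _ = exp 2 * r ^ 2 * n * (r / (exp 1 * n)) ^ r := by
        rw [show exp 2 = exp 1 * exp 1 by rw [← exp_add]; norm_num,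
          two_mul, pow_add, div_pow, div_pow, mul_pow]
        field_simp
        ring

theorem Ta_nonneg (n r : ℕ) {p : ℝ} (hp : 0 ≤ p) (α : ℕ × ℕ × ℕ × ℕ) : 0 ≤ Ta n r p α := by
  obtain ⟨a, b, c, d⟩ := α
  simp only [Ta, Fa]
  positivity

theorem pow_La_pred_eq {q : ℝ} (hq : 0 < q) {r : ℕ} (hr : 1 ≤ r) :
    q ^ La (r - 1, 0, 0, 0) = q * (q ^ (((r : ℝ) - 3) / 2)) ^ r := by
  have hLa : (La (r - 1, 0, 0, 0) : ℝ) = 1 + ((r : ℝ) - 3) / 2 * r := by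
    simp only [La, Nat.choose_zero_succ, add_zero, Nat.cast_choose_two, Nat.cast_sub hr]
    push_cast
    ring
  rw [← rpow_natCast, hLa, ← rpow_natCast, ← rpow_mul hq.le, rpow_add hq, rpow_one]

theorem Ta_pred_le {n r : ℕ} {p : ℝ} (hp : 0 < p) (hr : 1 ≤ r) (hn : 4 * r ^ 2 + 2 * r ≤ n) :
    Ta n r p (r - 1, 0, 0, 0) ≤
      exp 2 * p⁻¹ * r ^ 2 * n * (r * p⁻¹ ^ (((r : ℝ) - 3) / 2) / (exp 1 * n)) ^ r := by
  have hq : 0 < p⁻¹ := inv_pos.2 hp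
  rw [Ta, pow_La_pred_eq hq hr]
  calc Fa n r (r - 1, 0, 0, 0) * (p⁻¹ * (p⁻¹ ^ (((r : ℝ) - 3) / 2)) ^ r)
      ≤ exp 2 * r ^ 2 * n * (r / (exp 1 * n)) ^ r * (p⁻¹ * (p⁻¹ ^ (((r : ℝ) - 3) / 2)) ^ r) := by
        gcongr
        exact Fa_pred_le hr hn
    _ = _ := by rw [mul_div_right_comm, mul_pow]; ring

-- `hy` is `rpow_zf_sub` for `y = (z - ε - 1) / 2`.
theorem mul_rpow_div_pow_le_of_rpow_eq {q ε N L y : ℝ} (hq : 1 < q) (hε : 0 ≤ ε) (hN : 0 < N)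
    (hL : 0 < L) (hy : q ^ y = exp 1 * N / (2 * L * q ^ (ε / 2))) {r : ℕ} (hry : 2 * y < r)
    (hr : (r : ℝ) ≤ 2 * y + 1) (hrL : (r : ℝ) ≤ 2 * L) :
    (r * q ^ (((r : ℝ) - 3) / 2) / (exp 1 * N)) ^ r ≤
      (2 * L * q ^ (ε / 2) / (exp 1 * N)) ^ (2 + ε) := by
  have hq0 : 0 < q := one_pos.trans hq
  set ρ := q ^ (-(1 + ε / 2)) with hρ
  have hρ0 : 0 < ρ := rpow_pos_of_pos hq0 _
  have hρ1 : ρ ≤ 1 := rpow_le_one_of_one_le_of_nonpos hq.le (by linarith)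
  have hbase : r * q ^ (((r : ℝ) - 3) / 2) / (exp 1 * N) ≤ ρ := by
    have hexp : q ^ (((r : ℝ) - 3) / 2) ≤ q ^ y / q := by
      rw [← rpow_sub_one hq0.ne']
      exact rpow_le_rpow_of_exponent_le hq.le (by linarith)
    have hρ' : ρ = (q * q ^ (ε / 2))⁻¹ := by
      rw [hρ, rpow_neg hq0.le, rpow_add hq0, rpow_one]
    calc r * q ^ (((r : ℝ) - 3) / 2) / (exp 1 * N) ≤ r * (q ^ y / q) / (exp 1 * N) := by gcongr
      _ = r / (2 * L) * ρ := by rw [hy, hρ']; field_simp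
      _ ≤ 1 * ρ := by gcongr; rwa [div_le_one (by positivity)]
      _ = ρ := one_mul ρ
  calc (r * q ^ (((r : ℝ) - 3) / 2) / (exp 1 * N)) ^ r ≤ ρ ^ r := by gcongr
    _ = ρ ^ (r : ℝ) := (rpow_natCast ρ r).symm
    _ ≤ ρ ^ (2 * y) := rpow_le_rpow_of_exponent_ge hρ0 hρ1 hry.le
    _ = ((q ^ y)⁻¹) ^ (2 + ε) := by
      rw [hρ, ← rpow_mul hq0.le, inv_rpow (rpow_nonneg hq0.le y), ← rpow_neg (rpow_nonneg hq0.le y),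
        ← rpow_mul hq0.le]
      ring_nf
    _ = (2 * L * q ^ (ε / 2) / (exp 1 * N)) ^ (2 + ε) := by rw [hy, inv_div]

theorem tendsto_logb_natCast_atTop {q : ℝ} (hq : 1 < q) :
    Tendsto (fun n : ℕ => logb q n) atTop atTop :=
  (tendsto_logb_atTop hq).comp tendsto_natCast_atTop_atTop

theorem tendsto_logb_rpow_div_rpow {q : ℝ} (hq : 1 < q) (a : ℝ) {s : ℝ} (hs : 0 < s) :
    Tendsto (fun n : ℕ => logb q n ^ a / (n : ℝ) ^ s) atTop (𝓝 0) := by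
  have h := ((isLittleO_log_rpow_rpow_atTop a hs).tendsto_div_nhds_zero.comp
    tendsto_natCast_atTop_atTop).div_const (log q ^ a)
  rw [zero_div] at h
  refine h.congr' ?_
  filter_upwards [eventually_ge_atTop 1] with n hn
  rw [Function.comp_apply, logb, div_rpow (log_nonneg (by exact_mod_cast hn)) (log_pos hq).le]
  ring

theorem rpow_zf_sub {p : ℝ} (hq : 1 < p⁻¹) {n : ℕ} (hn : 1 < n) (ε : ℝ) :
    p⁻¹ ^ ((zf p n - ε - 1) / 2) = exp 1 * n / (2 * logb p⁻¹ n * p⁻¹ ^ (ε / 2)) := by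
  have hq0 : 0 < p⁻¹ := one_pos.trans hq
  have hL : 0 < logb p⁻¹ n := logb_pos hq (by exact_mod_cast hn)
  have hexp : (zf p n - ε - 1) / 2 =
      logb p⁻¹ n - logb p⁻¹ (logb p⁻¹ n) + logb p⁻¹ (exp 1 / 2) - ε / 2 := by
    rw [zf]; ring
  rw [hexp, rpow_sub hq0, rpow_add hq0, rpow_sub hq0, rpow_logb hq0 hq.ne' (by positivity),
    rpow_logb hq0 hq.ne' hL, rpow_logb hq0 hq.ne' (by positivity)]
  field_simp

theorem eventually_zf_sub_bounds {p : ℝ} (hq : 1 < p⁻¹) (ε : ℝ) :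
    ∀ᶠ n : ℕ in atTop, 1 ≤ zf p n - ε ∧ zf p n - ε ≤ 2 * logb p⁻¹ n := by
  set C := 2 * logb p⁻¹ (exp 1 / 2) + 1 - ε
  have hlog : ∀ᶠ x : ℝ in atTop, logb p⁻¹ x ≤ x / 2 := by
    filter_upwards [isLittleO_log_id_atTop.bound (half_pos (log_pos hq)),
      eventually_ge_atTop 0] with x hx hx0
    rw [norm_eq_abs, norm_eq_abs, id, abs_of_nonneg hx0] at hx
    rw [logb, div_le_iff₀ (log_pos hq)]
    linarith [le_abs_self (log x)]
  have hx : ∀ᶠ x : ℝ in atTop,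
      1 ≤ 2 * x - 2 * logb p⁻¹ x + C ∧ 2 * x - 2 * logb p⁻¹ x + C ≤ 2 * x := by
    filter_upwards [hlog, (tendsto_logb_atTop hq).eventually_ge_atTop (C / 2),
      eventually_ge_atTop (1 - C)] with x h1 h2 h3
    constructor <;> linarith
  filter_upwards [(tendsto_logb_natCast_atTop hq).eventually hx]
    with n hn
  have hz : zf p n - ε = 2 * logb p⁻¹ n - 2 * logb p⁻¹ (logb p⁻¹ n) + C := by
    rw [zf]; ring
  rwa [hz]

theorem eventually_floor_zf_sub_le {p : ℝ} (hq : 1 < p⁻¹) (ε : ℝ) :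
    ∀ᶠ n : ℕ in atTop, (⌊zf p n - ε⌋₊ : ℝ) ≤ 2 * logb p⁻¹ n := by
  filter_upwards [eventually_zf_sub_bounds hq ε] with n ⟨h1, h2⟩
  exact (Nat.floor_le (by linarith)).trans h2

theorem exists_eventually_Ta_floor_zf_sub_le {p ε : ℝ} (hq : 1 < p⁻¹) (hε : 0 ≤ ε) :
    ∃ K : ℝ, ∀ᶠ n : ℕ in atTop,
      Ta n ⌊zf p n - ε⌋₊ p (⌊zf p n - ε⌋₊ - 1, 0, 0, 0) ≤
        K * logb p⁻¹ n ^ (4 + ε) / (n : ℝ) ^ (1 + ε) := by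
  have hp : 0 < p := inv_pos.1 (one_pos.trans hq)
  refine ⟨4 * exp 2 * p⁻¹ * (2 * p⁻¹ ^ (ε / 2) / exp 1) ^ (2 + ε), ?_⟩
  filter_upwards [eventually_zf_sub_bounds hq ε, eventually_floor_zf_sub_le hq ε,
    (tendsto_logb_rpow_div_rpow hq 2 one_pos).eventually
      (ge_mem_nhds (by norm_num : (0 : ℝ) < 1 / 20)),
    (tendsto_logb_natCast_atTop hq).eventually_ge_atTop 1,
    eventually_gt_atTop 1] with n hw hrL hsmall hL1 hn1
  set L := logb p⁻¹ n
  set w := zf p n - ε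
  set r := ⌊w⌋₊
  have hN : (0 : ℝ) < n := by positivity
  have hr1 : 1 ≤ r := Nat.le_floor (by exact_mod_cast hw.1)
  have hrn : 4 * r ^ 2 + 2 * r ≤ n := by
    rw [rpow_two, rpow_one, div_le_iff₀ hN] at hsmall
    have hr0 : (0 : ℝ) ≤ r := r.cast_nonneg
    have : ((4 * r ^ 2 + 2 * r : ℕ) : ℝ) ≤ n := by
      push_cast
      nlinarith [mul_le_mul hrL hrL hr0 (by linarith)]
    exact_mod_cast this
  calc Ta n r p (r - 1, 0, 0, 0)
      ≤ exp 2 * p⁻¹ * r ^ 2 * n * (r * p⁻¹ ^ (((r : ℝ) - 3) / 2) / (exp 1 * n)) ^ r :=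
        Ta_pred_le hp hr1 hrn
    _ ≤ exp 2 * p⁻¹ * (2 * L) ^ 2 * n * (2 * L * p⁻¹ ^ (ε / 2) / (exp 1 * n)) ^ (2 + ε) := by
        gcongr
        exact mul_rpow_div_pow_le_of_rpow_eq hq hε hN (by linarith) (rpow_zf_sub hq hn1 ε)
          (by linarith [Nat.lt_floor_add_one w])
          (by linarith [Nat.floor_le (by linarith : 0 ≤ w)]) hrL
    _ = _ := by
        have hL : 0 < L := by linarith
        have hpowL : L ^ (4 + ε) = L ^ 2 * L ^ (2 + ε) := by
          rw [show (4 : ℝ) + ε = 2 + (2 + ε) by ring, rpow_add hL, rpow_two]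
        have hpowN : (n : ℝ) ^ (2 + ε) = n * (n : ℝ) ^ (1 + ε) := by
          rw [show (2 : ℝ) + ε = 1 + (1 + ε) by ring, rpow_add hN, rpow_one]
        rw [show 2 * L * p⁻¹ ^ (ε / 2) / (exp 1 * n) = 2 * p⁻¹ ^ (ε / 2) / exp 1 * L / n by ring,
          div_rpow (by positivity) hN.le, mul_rpow (by positivity) hL.le, hpowL, hpowN]
        field_simp
        ring

theorem eventually_Ta_floor_zf_sub_le {p ε : ℝ} (hq : 1 < p⁻¹) (hε : 0 < ε) :
    ∀ᶠ n : ℕ in atTop,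
      Ta n ⌊zf p n - ε⌋₊ p (⌊zf p n - ε⌋₊ - 1, 0, 0, 0) ≤ logb p⁻¹ n ^ 2 / n := by
  obtain ⟨K, hK⟩ := exists_eventually_Ta_floor_zf_sub_le hq hε.le
  have hsmall := ((tendsto_logb_rpow_div_rpow hq (2 + ε) hε).const_mul K).eventually
    (ge_mem_nhds (show K * 0 < 1 by simp))
  filter_upwards [hK, hsmall, (tendsto_logb_natCast_atTop hq).eventually_gt_atTop 0,
    eventually_gt_atTop 0] with n hT hKsmall hL hn
  have hN : (0 : ℝ) < n := by exact_mod_cast hn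
  calc _ ≤ K * logb p⁻¹ n ^ (4 + ε) / (n : ℝ) ^ (1 + ε) := hT
    _ = K * (logb p⁻¹ n ^ (2 + ε) / (n : ℝ) ^ ε) * (logb p⁻¹ n ^ 2 / n) := by
      rw [show (4 : ℝ) + ε = (2 + ε) + 2 by ring, rpow_add hL, rpow_two, add_comm (1 : ℝ),
        rpow_add hN, rpow_one]
      field_simp
    _ ≤ 1 * (logb p⁻¹ n ^ 2 / n) := by gcongr
    _ = logb p⁻¹ n ^ 2 / n := one_mul _

theorem tendsto_floor_zf_sub_pow_four_mul_Ta {p ε : ℝ} (hq : 1 < p⁻¹) (hε : 0 < ε) :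
    Tendsto (fun n : ℕ => (⌊zf p n - ε⌋₊ : ℝ) ^ 4 *
      Ta n ⌊zf p n - ε⌋₊ p (⌊zf p n - ε⌋₊ - 1, 0, 0, 0)) atTop (𝓝 0) := by
  have hp : 0 ≤ p := (inv_pos.1 (one_pos.trans hq)).le
  obtain ⟨K, hK⟩ := exists_eventually_Ta_floor_zf_sub_le hq hε.le
  have hbound := (tendsto_logb_rpow_div_rpow hq (8 + ε) (by linarith : 0 < 1 + ε)).const_mul
    (16 * K)
  rw [mul_zero] at hbound
  refine squeeze_zero' (Eventually.of_forall fun n => ?_) ?_ hbound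
  · exact mul_nonneg (by positivity) (Ta_nonneg _ _ hp _)
  filter_upwards [hK, eventually_floor_zf_sub_le hq ε,
    (tendsto_logb_natCast_atTop hq).eventually_gt_atTop 0] with n hT hr hL
  calc (⌊zf p n - ε⌋₊ : ℝ) ^ 4 * Ta n ⌊zf p n - ε⌋₊ p (⌊zf p n - ε⌋₊ - 1, 0, 0, 0)
      ≤ (2 * logb p⁻¹ n) ^ 4 * (K * logb p⁻¹ n ^ (4 + ε) / (n : ℝ) ^ (1 + ε)) :=
        mul_le_mul (by gcongr) hT (Ta_nonneg _ _ hp _) (by positivity)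
    _ = 16 * K * (logb p⁻¹ n ^ (8 + ε) / (n : ℝ) ^ (1 + ε)) := by
      rw [show (8 : ℝ) + ε = (4 : ℕ) + (4 + ε) by push_cast; ring, rpow_add hL (4 : ℕ),
        rpow_natCast]
      ring

theorem stmt13_general (p ε : ℝ) (hp0 : 0 < p) (hp1 : p < 1) (hε : 0 < ε) :
    (∃ C : ℝ, 0 < C ∧ ∀ᶠ n : ℕ in atTop,
      Ta n ⌊zf p n - ε⌋.toNat p (⌊zf p n - ε⌋.toNat - 1, 0, 0, 0) ≤
        C * (Real.logb p⁻¹ n) ^ 2 / n) ∧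
    Tendsto (fun n : ℕ => (⌊zf p n - ε⌋.toNat : ℝ) ^ 4 *
        Ta n ⌊zf p n - ε⌋.toNat p (⌊zf p n - ε⌋.toNat - 1, 0, 0, 0))
      atTop (nhds 0) := by
  have hq : 1 < p⁻¹ := one_lt_inv_iff₀.2 ⟨hp0, hp1⟩
  simp only [Int.floor_toNat]
  exact ⟨⟨1, one_pos, by simpa only [one_mul] using eventually_Ta_floor_zf_sub_le hq hε⟩,
    tendsto_floor_zf_sub_pow_four_mul_Ta hq hε⟩

/-- For `r = r(n) = ⌊z(n,p) − ε⌋` there is a constant `C > 0` such that for all sufficiently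
large `n`, `T_{(r−1,0,0,0)} ≤ C·(log_q n)²/n`; in particular `r⁴·T_{(r−1,0,0,0)} → 0`. -/
theorem stmt13 (p ε : ℝ) (hp0 : 0 < p) (hp1 : p < 1) (hε : 0 < ε) (hε' : ε < 1/2) :
    (∃ C : ℝ, 0 < C ∧ ∀ᶠ n : ℕ in atTop,
      Ta n ⌊zf p n - ε⌋.toNat p (⌊zf p n - ε⌋.toNat - 1, 0, 0, 0) ≤
        C * (Real.logb p⁻¹ n) ^ 2 / n) ∧
    Tendsto (fun n : ℕ => (⌊zf p n - ε⌋.toNat : ℝ) ^ 4 *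
        Ta n ⌊zf p n - ε⌋.toNat p (⌊zf p n - ε⌋.toNat - 1, 0, 0, 0))
      atTop (nhds 0) :=
  stmt13_general p ε hp0 hp1 hε

end
end
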